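/- Let Q be a symmetric positive semidefinite 3×3 real matrix, b ∈ ℝ³, d > 0, and set 𝔸 := [Q + b bᵀ/d, b; bᵀ, d]. Then there exists a constant α₄ > 0 such that for every g ∈ SE(3), ‖ψ((I₄ − g⁻¹) 𝔸)‖² ≤ α₄ ‖I₄ − g‖_F² and ‖Ad*_{g⁻¹} ψ((I₄ − g⁻¹) 𝔸)‖² ≤ α₄ ‖I₄ − g‖_F². -/
import Mathlib


open Matrix BigOperators

noncomputable section

abbrev V3 : Type := Fin 3 → ℝ
abbrev V4 : Type := (Fin 3 ⊕ Fin 1) → ℝ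
abbrev V6 : Type := (Fin 3 → ℝ) × (Fin 3 → ℝ)
abbrev M3 : Type := Matrix (Fin 3) (Fin 3) ℝ
abbrev M4 : Type := Matrix (Fin 3 ⊕ Fin 1) (Fin 3 ⊕ Fin 1) ℝ

/-- cross product on ℝ³ -/
def cross (x y : V3) : V3 := crossProduct x y

/-- skew-symmetric matrix `x^×` with `x^× y = x × y` -/
def skew (x : V3) : M3 := !![0, -x 2, x 1; x 2, 0, -x 0; -x 1, x 0, 0]

/-- rank-one matrix `x yᵀ` -/
def outer (x y : V3) : M3 := Matrix.vecMulVec x y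

/-- `R` is a rotation matrix -/
def isRot (R : M3) : Prop := Rᵀ * R = 1 ∧ R.det = 1

def colV (p : V3) : Matrix (Fin 3) (Fin 1) ℝ := Matrix.of fun i _ => p i
def rowV (p : V3) : Matrix (Fin 1) (Fin 3) ℝ := Matrix.of fun _ j => p j

/-- homogeneous matrix `[R, p; 0, 1]` -/
def SE3mat (R : M3) (p : V3) : M4 := Matrix.fromBlocks R (colV p) 0 1

/-- membership in SE(3) -/
def inSE3 (g : M4) : Prop := ∃ R p, isRot R ∧ g = SE3mat R p

/-- vector part of an element of ℝ⁴ -/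
def vpart (r : V4) : V3 := fun i => r (Sum.inl i)
/-- scalar part of an element of ℝ⁴ -/
def spart (r : V4) : ℝ := r (Sum.inr 0)

/-- wedge product `b ∧ r := (b_v × r_v, b_s r_v − r_s b_v) ∈ ℝ⁶` -/
def wedge (b r : V4) : V6 :=
  (cross (vpart b) (vpart r), spart b • vpart r - spart r • vpart b)

/-- `ψ_a(A) := ½(a₃₂ − a₂₃, a₁₃ − a₃₁, a₂₁ − a₁₂)` -/
def psia (A : M3) : V3 :=
  ![(A 2 1 - A 1 2) / 2, (A 0 2 - A 2 0) / 2, (A 1 0 - A 0 1) / 2]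

/-- `ψ([A, b; c, d]) := (ψ_a(A), ½ b) ∈ ℝ⁶` -/
def psi (M : M4) : V6 :=
  (psia M.toBlocks₁₁, fun i => M (Sum.inl i) (Sum.inr 0) / 2)

/-- `ℙ([A, b; c, d]) := [(A − Aᵀ)/2, b; 0, 0]` -/
def Pproj (M : M4) : M4 :=
  Matrix.fromBlocks ((1 / 2 : ℝ) • (M.toBlocks₁₁ - M.toBlocks₁₁ᵀ)) M.toBlocks₁₂ 0 0

/-- `Ad*_g = [Rᵀ, −Rᵀ p^×; 0, Rᵀ]` acting on ℝ⁶, for `g = [R, p; 0, 1]` -/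
def AdStar (g : M4) (ξ : V6) : V6 :=
  ((g.toBlocks₁₁)ᵀ.mulVec (ξ.1 - cross (fun i => g (Sum.inl i) (Sum.inr 0)) ξ.2),
   (g.toBlocks₁₁)ᵀ.mulVec ξ.2)

/-- `(ω, v)^∧ := [ω^×, v; 0, 0]` -/
def hat (ξ : V6) : M4 := Matrix.fromBlocks (skew ξ.1) (colV ξ.2) 0 0

/-- squared Euclidean norm on ℝ³ -/
def sq3 (x : V3) : ℝ := ∑ i, x i ^ 2
/-- squared Euclidean norm on ℝ⁴ -/
def sq4 (x : V4) : ℝ := ∑ i, x i ^ 2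
/-- squared Euclidean norm on ℝ⁶ -/
def sq6 (ξ : V6) : ℝ := sq3 ξ.1 + sq3 ξ.2
/-- squared Frobenius norm of a 4×4 matrix -/
def frob4 (M : M4) : ℝ := ∑ i, ∑ j, M i j ^ 2
/-- squared Frobenius norm of a 3×3 matrix -/
def frob3 (M : M3) : ℝ := ∑ i, ∑ j, M i j ^ 2

/-- membership in `𝓜₀` (last row zero, block form `[M₁, m₂; 0, 0]`) -/
def inM0 (M : M4) : Prop := ∃ (M₁ : M3) (m₂ : V3), M = Matrix.fromBlocks M₁ (colV m₂) 0 0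

/-- `Δ_Q(u, v) := uᵀ((tr(Q) − 2 vᵀQv) I₃ − Q + 2 Q v vᵀ) u` -/
def DeltaQ (Q : M3) (u v : V3) : ℝ :=
  u ⬝ᵥ Matrix.mulVec
    ((Q.trace - 2 * (v ⬝ᵥ Q.mulVec v)) • (1 : M3) - Q + (2 : ℝ) • (Q * outer v v)) u

/-- angle-axis rotation `R_a(θ, u) = I₃ + sin θ · u^× + (1 − cos θ)(u^×)²` -/
def Ra (θ : ℝ) (u : V3) : M3 :=
  1 + Real.sin θ • skew u + (1 - Real.cos θ) • (skew u * skew u)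

namespace Stmt10Aux

lemma sq3_nonneg (x : V3) : 0 ≤ sq3 x := Finset.sum_nonneg fun _ _ => sq_nonneg _

lemma frob3_nonneg (M : M3) : 0 ≤ frob3 M :=
  Finset.sum_nonneg fun _ _ => Finset.sum_nonneg fun _ _ => sq_nonneg _

lemma mulVec_colV (M : M3) (x : V3) : M * colV x = colV (M.mulVec x) := by
  ext i j
  simp [colV, Matrix.mul_apply, Matrix.mulVec, dotProduct]

lemma colV_mul_rowV (q c : V3) : colV q * rowV c = outer q c := by
  ext i j
  simp [colV, rowV, outer, Matrix.vecMulVec_apply, Matrix.mul_apply]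

lemma colV_mul_const (q : V3) (d : ℝ) :
    colV q * (Matrix.of fun _ _ => d : Matrix (Fin 1) (Fin 1) ℝ) = colV (d • q) := by
  ext i j
  simp [colV, Matrix.mul_apply, mul_comm]

lemma colV_add (x y : V3) : colV (x + y) = colV x + colV y := by
  ext i j; simp [colV]

lemma se3_inv (R : M3) (p : V3) (hR : Rᵀ * R = 1) :
    (SE3mat R p)⁻¹ = SE3mat Rᵀ (-(Rᵀ.mulVec p)) := by
  apply Matrix.inv_eq_right_inv
  have hR' : R * Rᵀ = 1 := mul_eq_one_comm.mp hR
  rw [SE3mat, SE3mat, Matrix.fromBlocks_multiply]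
  have h2 : R * colV (-(Rᵀ.mulVec p)) + colV p * (1 : Matrix (Fin 1) (Fin 1) ℝ) = 0 := by
    rw [Matrix.mul_one, mulVec_colV, Matrix.mulVec_neg, Matrix.mulVec_mulVec, hR',
      Matrix.one_mulVec]
    ext i j; simp [colV]
  rw [hR', h2]
  simp [Matrix.fromBlocks_one]

lemma sq3_eq_dot (x : V3) : sq3 x = x ⬝ᵥ x := by
  simp [sq3, dotProduct, sq]

lemma sq3_mulVec_rot (R : M3) (hR : Rᵀ * R = 1) (v : V3) : sq3 (R.mulVec v) = sq3 v := by
  rw [sq3_eq_dot, sq3_eq_dot, Matrix.dotProduct_mulVec, ← Matrix.mulVec_transpose,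
    Matrix.mulVec_mulVec, hR, Matrix.one_mulVec]

lemma frob3_transpose (M : M3) : frob3 Mᵀ = frob3 M := by
  unfold frob3
  rw [Finset.sum_comm]
  simp [Matrix.transpose_apply]

lemma frob3_eq_trace (M : M3) : frob3 M = (Mᵀ * M).trace := by
  unfold frob3
  simp only [Matrix.trace, Matrix.mul_apply, Matrix.diag, Matrix.transpose_apply, sq,
    Finset.sum_apply]
  exact Finset.sum_comm

lemma frob3_rot (R : M3) (hR : Rᵀ * R = 1) : frob3 R = 3 := by
  rw [frob3_eq_trace, hR, Matrix.trace_one]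
  norm_num

lemma sq3_mulVec_le (M : M3) (v : V3) : sq3 (M.mulVec v) ≤ frob3 M * sq3 v := by
  unfold sq3 frob3
  rw [Finset.sum_mul]
  apply Finset.sum_le_sum
  intro i _
  simpa [Matrix.mulVec, dotProduct] using
    Finset.sum_mul_sq_le_sq_mul_sq Finset.univ (fun j => M i j) v

lemma frob3_mul_le (M N : M3) : frob3 (M * N) ≤ frob3 M * frob3 N := by
  unfold frob3
  calc ∑ i, ∑ j, (M * N) i j ^ 2
      ≤ ∑ i, ∑ j, (∑ k, M i k ^ 2) * (∑ k, N k j ^ 2) := by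
        refine Finset.sum_le_sum fun i _ => Finset.sum_le_sum fun j _ => ?_
        simpa [Matrix.mul_apply] using
          Finset.sum_mul_sq_le_sq_mul_sq Finset.univ (fun k => M i k) (fun k => N k j)
    _ = (∑ i, ∑ k, M i k ^ 2) * (∑ j, ∑ k, N k j ^ 2) := by
        rw [Finset.sum_mul]
        refine Finset.sum_congr rfl fun i _ => ?_
        rw [← Finset.mul_sum]
    _ = (∑ i, ∑ k, M i k ^ 2) * (∑ k, ∑ j, N k j ^ 2) := by
        congr 1
        exact Finset.sum_comm

lemma frob3_outer (q c : V3) : frob3 (outer q c) = sq3 q * sq3 c := by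
  unfold frob3 outer sq3
  simp only [Matrix.vecMulVec_apply, mul_pow, ← Finset.mul_sum]
  rw [← Finset.sum_mul]

lemma frob3_add_le (M N : M3) : frob3 (M + N) ≤ 2 * frob3 M + 2 * frob3 N := by
  unfold frob3
  have h : ∀ i j : Fin 3, (M + N) i j ^ 2 ≤ 2 * M i j ^ 2 + 2 * N i j ^ 2 := by
    intro i j
    simp only [Matrix.add_apply]
    nlinarith [sq_nonneg (M i j - N i j)]
  calc ∑ i, ∑ j, (M + N) i j ^ 2 ≤ ∑ i, ∑ j, (2 * M i j ^ 2 + 2 * N i j ^ 2) :=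
        Finset.sum_le_sum fun i _ => Finset.sum_le_sum fun j _ => h i j
    _ = 2 * (∑ i, ∑ j, M i j ^ 2) + 2 * (∑ i, ∑ j, N i j ^ 2) := by
        simp [Finset.sum_add_distrib, Finset.mul_sum]

lemma sq3_add_le (x y : V3) : sq3 (x + y) ≤ 2 * sq3 x + 2 * sq3 y := by
  unfold sq3
  have h : ∀ i : Fin 3, (x + y) i ^ 2 ≤ 2 * x i ^ 2 + 2 * y i ^ 2 := by
    intro i
    simp only [Pi.add_apply]
    nlinarith [sq_nonneg (x i - y i)]
  calc ∑ i, (x + y) i ^ 2 ≤ ∑ i, (2 * x i ^ 2 + 2 * y i ^ 2) :=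
        Finset.sum_le_sum fun i _ => h i
    _ = 2 * (∑ i, x i ^ 2) + 2 * (∑ i, y i ^ 2) := by
        simp [Finset.sum_add_distrib, Finset.mul_sum]

lemma sq3_smul (c : ℝ) (x : V3) : sq3 (c • x) = c ^ 2 * sq3 x := by
  simp [sq3, mul_pow, Finset.mul_sum]

lemma sq3_neg (x : V3) : sq3 (-x) = sq3 x := by simp [sq3]

lemma sq3_psia_le (N : M3) : sq3 (psia N) ≤ frob3 N := by
  simp only [sq3, psia, frob3, Fin.sum_univ_three]
  simp only [Matrix.cons_val_zero, Matrix.cons_val_one, Matrix.head_cons,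
    Matrix.cons_val_two, Matrix.tail_cons]
  nlinarith [sq_nonneg (N 2 1 + N 1 2), sq_nonneg (N 0 2 + N 2 0), sq_nonneg (N 1 0 + N 0 1),
    sq_nonneg (N 0 0), sq_nonneg (N 1 1), sq_nonneg (N 2 2)]

lemma cross_eq (x y : V3) :
    cross x y = ![x 1 * y 2 - x 2 * y 1, x 2 * y 0 - x 0 * y 2, x 0 * y 1 - x 1 * y 0] := rfl

lemma sq3_cross_le (x y : V3) : sq3 (cross x y) ≤ sq3 x * sq3 y := by
  rw [cross_eq]
  simp only [sq3, Fin.sum_univ_three, Matrix.cons_val_zero, Matrix.cons_val_one,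
    Matrix.head_cons, Matrix.cons_val_two, Matrix.tail_cons]
  nlinarith [sq_nonneg (x 0 * y 0 + x 1 * y 1 + x 2 * y 2)]

lemma frob3_one : frob3 (1 : M3) = 3 := by
  rw [frob3_eq_trace]
  simp

end Stmt10Aux
namespace Stmt10Aux

lemma frob3_neg (M : M3) : frob3 (-M) = frob3 M := by simp [frob3]

lemma sq3_half (x : V3) : sq3 (fun i => x i / 2) = sq3 x / 4 := by
  simp [sq3, div_pow, Finset.sum_div]
  norm_num

lemma one_sub_SE3 (R : M3) (p : V3) :
    (1 : M4) - SE3mat R p = Matrix.fromBlocks (1 - R) (colV (-p)) 0 0 := by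
  rw [SE3mat, ← Matrix.fromBlocks_one]
  ext (i|i) (j|j) <;> simp [Matrix.fromBlocks, colV]

lemma frob4_block (M : M3) (m : V3) :
    frob4 (Matrix.fromBlocks M (colV m) 0 0) = frob3 M + sq3 m := by
  unfold frob4 frob3 sq3
  simp [Fintype.sum_sum_type, colV, Finset.sum_add_distrib]

lemma MA_eq (S : M3) (q : V3) (Q' : M3) (b : V3) (d : ℝ) :
    (Matrix.fromBlocks S (colV q) 0 0 : M4) *
      Matrix.fromBlocks Q' (colV b) (rowV b) (Matrix.of fun _ _ => d : Matrix (Fin 1) (Fin 1) ℝ)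
    = (Matrix.fromBlocks (S * Q' + outer q b) (colV (S.mulVec b + d • q)) 0 0 : M4) := by
  rw [Matrix.fromBlocks_multiply, colV_mul_rowV, mulVec_colV, colV_mul_const, colV_add]
  simp

lemma psi_block (M : M3) (m : V3) :
    psi (Matrix.fromBlocks M (colV m) 0 0) = (psia M, fun i => m i / 2) := by
  unfold psi
  rw [Matrix.toBlocks_fromBlocks₁₁]
  simp [Matrix.fromBlocks_apply₁₂, colV]

lemma adStar_SE3 (R : M3) (p : V3) (a c : V3) :
    AdStar (SE3mat R p) (a, c) = (Rᵀ.mulVec (a - cross p c), Rᵀ.mulVec c) := by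
  have hp : (fun i => SE3mat R p (Sum.inl i) (Sum.inr 0)) = p := by
    funext i; simp [SE3mat, Matrix.fromBlocks_apply₁₂, colV]
  unfold AdStar
  rw [hp, SE3mat, Matrix.toBlocks_fromBlocks₁₁]

lemma cross_helper (q u : V3) (d : ℝ) (w : V3) :
    w - cross (-q) (fun i => (u + d • q) i / 2) = w + (1/2 : ℝ) • cross q u := by
  funext i
  fin_cases i <;>
    simp [cross_eq, Pi.add_apply, Pi.smul_apply, smul_eq_mul] <;> ring

lemma sq6_pair (x y : V3) : sq6 (x, y) = sq3 x + sq3 y := rfl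

end Stmt10Aux
open Stmt10Aux in
theorem stmt10 (Q : M3) (hsym : Qᵀ = Q) (hpsd : ∀ x : V3, 0 ≤ x ⬝ᵥ Q.mulVec x)
    (b : V3) (d : ℝ) (hd : 0 < d)
    (A : M4) (hA : A = Matrix.fromBlocks (Q + d⁻¹ • outer b b) (colV b) (rowV b)
      (Matrix.of fun _ _ => d)) :
    ∃ α₄ : ℝ, 0 < α₄ ∧ ∀ g : M4, inSE3 g →
      sq6 (psi ((1 - g⁻¹) * A)) ≤ α₄ * frob4 (1 - g) ∧
      sq6 (AdStar g⁻¹ (psi ((1 - g⁻¹) * A))) ≤ α₄ * frob4 (1 - g) := by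
  subst hA
  set Q' : M3 := Q + d⁻¹ • outer b b with hQ'
  have hQ0 : 0 ≤ frob3 Q' := frob3_nonneg Q'
  have hb0 : 0 ≤ sq3 b := sq3_nonneg b
  refine ⟨6 * frob3 Q' + 13 * sq3 b + d ^ 2 + 1, by nlinarith [sq_nonneg d], ?_⟩
  rintro g ⟨R, p, hRot, rfl⟩
  have hR : Rᵀ * R = 1 := hRot.1
  have hR' : R * Rᵀ = 1 := mul_eq_one_comm.mp hR
  set q : V3 := Rᵀ.mulVec p with hq
  set S : M3 := 1 - Rᵀ with hS
  have hS0 : 0 ≤ frob3 S := frob3_nonneg S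
  have hq0 : 0 ≤ sq3 q := sq3_nonneg q
  have hginv : (SE3mat R p)⁻¹ = SE3mat Rᵀ (-q) := se3_inv R p hR
  have hM : (1 : M4) - (SE3mat R p)⁻¹ = Matrix.fromBlocks S (colV q) 0 0 := by
    rw [hginv, one_sub_SE3, neg_neg]
  have hMA : ((1 : M4) - (SE3mat R p)⁻¹) *
      Matrix.fromBlocks Q' (colV b) (rowV b) (Matrix.of fun _ _ => d) =
      Matrix.fromBlocks (S * Q' + outer q b) (colV (S.mulVec b + d • q)) 0 0 := by
    rw [hM, MA_eq]
  have hψ : psi (((1 : M4) - (SE3mat R p)⁻¹) *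
      Matrix.fromBlocks Q' (colV b) (rowV b) (Matrix.of fun _ _ => d)) =
      (psia (S * Q' + outer q b), fun i => (S.mulVec b + d • q) i / 2) := by
    rw [hMA, psi_block]
  have hF : frob4 (1 - SE3mat R p) = frob3 S + sq3 q := by
    rw [one_sub_SE3, frob4_block, sq3_neg]
    congr 1
    · rw [hS, show (1 : M3) - Rᵀ = ((1 : M3) - R)ᵀ by
        rw [Matrix.transpose_sub, Matrix.transpose_one], frob3_transpose]
    · rw [hq]
      exact (sq3_mulVec_rot Rᵀ (by rwa [Matrix.transpose_transpose]) p).symm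
  have h12 : frob3 S ≤ 12 := by
    have h := frob3_add_le (1 : M3) (-Rᵀ)
    rw [frob3_neg, frob3_transpose, frob3_rot R hR, frob3_one] at h
    have hSe : S = 1 + -Rᵀ := by rw [hS, sub_eq_add_neg]
    rw [hSe]; linarith
  -- bound 1
  have b1 : sq3 (psia (S * Q' + outer q b)) ≤
      2 * (frob3 Q' + sq3 b) * (frob3 S + sq3 q) := by
    have h1 := sq3_psia_le (S * Q' + outer q b)
    have h2 := frob3_add_le (S * Q') (outer q b)
    have h3 := frob3_mul_le S Q'
    have h4 := frob3_outer q b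
    nlinarith [mul_nonneg hQ0 hq0, mul_nonneg hb0 hS0]
  -- bound 2
  have b2 : sq3 (fun i => (S.mulVec b + d • q) i / 2) ≤
      ((sq3 b + d ^ 2) / 2) * (frob3 S + sq3 q) := by
    rw [sq3_half]
    have h1 := sq3_add_le (S.mulVec b) (d • q)
    have h2 := sq3_smul d q
    have h3 := sq3_mulVec_le S b
    nlinarith [mul_nonneg hb0 hq0, mul_nonneg (sq_nonneg d) hS0]
  -- bound on the cross term
  have hcu : sq3 (cross q (S.mulVec b)) ≤ 12 * (sq3 b * sq3 q) := by
    have h1 := sq3_cross_le q (S.mulVec b)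
    have h2 := sq3_mulVec_le S b
    have h3 := mul_le_mul_of_nonneg_left h2 hq0
    have h4 := mul_le_mul_of_nonneg_right h12 (mul_nonneg hb0 hq0)
    nlinarith
  constructor
  · rw [hψ, hF]
    rw [sq6_pair]
    nlinarith [mul_nonneg hQ0 (add_nonneg hS0 hq0), mul_nonneg hb0 (add_nonneg hS0 hq0),
      mul_nonneg (sq_nonneg d) (add_nonneg hS0 hq0), add_nonneg hS0 hq0]
  · rw [hψ, hF, hginv, adStar_SE3, Matrix.transpose_transpose,
      cross_helper q (S.mulVec b) d]
    rw [sq6_pair]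
    rw [sq3_mulVec_rot R hR, sq3_mulVec_rot R hR]
    have e1 : sq3 (psia (S * Q' + outer q b) + (1/2 : ℝ) • cross q (S.mulVec b)) ≤
        2 * sq3 (psia (S * Q' + outer q b)) + (1/2) * sq3 (cross q (S.mulVec b)) := by
      have h1 := sq3_add_le (psia (S * Q' + outer q b)) ((1/2 : ℝ) • cross q (S.mulVec b))
      have h2 := sq3_smul (1/2 : ℝ) (cross q (S.mulVec b))
      nlinarith [sq3_nonneg (cross q (S.mulVec b))]
    nlinarith [mul_nonneg hQ0 (add_nonneg hS0 hq0), mul_nonneg hb0 (add_nonneg hS0 hq0),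
      mul_nonneg (sq_nonneg d) (add_nonneg hS0 hq0), add_nonneg hS0 hq0,
      mul_nonneg hb0 hS0, mul_nonneg hb0 hq0]
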